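/- Let P be a d×d real orthogonal projection matrix of rank p with 1 ≤ p ≤ d−1, P⊥ = I − P, q = d − p, and let λ₁, λ₂ > 0. Let D ∈ ℝ^{k×d} be a matrix whose k rows each have Euclidean norm at most 1, and set B = DᵀD + λ₁·P⊥ + λ₂·P. Then log( det(B) / (λ₁^q · λ₂^p) ) ≤ p·log(1 + k/(p·λ₂)) + q·log(1 + k/(q·λ₁)). -/

import Mathlib

/-!
Put `α = λ₂ + k/p`, `β = λ₁ + k/q` and `S = β⁻¹ P⊥ + α⁻¹ P`, so that `det S = α^(-p) β^(-q)`.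
AM-GM for the eigenvalues of the positive semidefinite matrix `S^½ B S^½` gives
`det S · det B ≤ (tr (S B) / d)^d`. As `P` and `P⊥` are complementary projections,
`tr (S B) = α⁻¹ (tr (P DᵀD) + λ₂ p) + β⁻¹ (tr (P⊥ DᵀD) + λ₁ q)`, where both traces of `DᵀD`
are nonnegative with sum `∑ ‖xᵢ‖² ≤ k`; so the two summands are at most `p` and `q`, and
`tr (S B) ≤ d`. Hence `det B ≤ α^p β^q`, which is the claim after dividing by `λ₁^q λ₂^p`.
-/

open Matrix Finset
open scoped ComplexOrder

theorem Real.prod_le_arith_mean_pow {ι : Type*} (s : Finset ι) {z : ι → ℝ}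
    (hz : ∀ i ∈ s, 0 ≤ z i) : ∏ i ∈ s, z i ≤ ((∑ i ∈ s, z i) / #s) ^ #s := by
  rcases s.eq_empty_or_nonempty with rfl | hs
  · simp
  have hamgm := Real.geom_mean_le_arith_mean s (fun _ => 1) z (fun _ _ => zero_le_one)
    (by simpa using hs) hz
  simp only [Real.rpow_one, sum_const, nsmul_eq_mul, mul_one, one_mul] at hamgm
  calc ∏ i ∈ s, z i = ((∏ i ∈ s, z i) ^ ((#s : ℝ)⁻¹)) ^ #s := by
        rw [← Real.rpow_natCast, ← Real.rpow_mul (prod_nonneg hz),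
          inv_mul_cancel₀ (by simpa using hs.ne_empty), Real.rpow_one]
    _ ≤ ((∑ i ∈ s, z i) / #s) ^ #s :=
        pow_le_pow_left₀ (Real.rpow_nonneg (prod_nonneg hz) _) hamgm _

namespace Matrix

variable {n : Type*} [Fintype n]

theorem trace_transpose_mul_self_le_card {m : Type*} [Fintype m] {D : Matrix m n ℝ}
    (hD : ∀ i, D i ⬝ᵥ D i ≤ 1) : (Dᵀ * D).trace ≤ Fintype.card m := by
  have : (Dᵀ * D).trace = ∑ i, D i ⬝ᵥ D i := by
    rw [trace_mul_comm]; simp [trace, mul_apply, dotProduct]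
  rw [this]
  simpa using sum_le_sum fun i (_ : i ∈ univ) => hD i

section Projection

variable {𝕜 : Type*} [RCLike 𝕜] {P : Matrix n n 𝕜}

theorem IsHermitian.posSemidef_of_isIdempotentElem (hP : P.IsHermitian)
    (hPP : IsIdempotentElem P) : P.PosSemidef := by
  simpa only [hP.eq, hPP.eq] using posSemidef_conjTranspose_mul_self P

variable [DecidableEq n]

theorem IsHermitian.eigenvalues_eq_zero_or_one (hP : P.IsHermitian) (hPP : IsIdempotentElem P)
    (i : n) : hP.eigenvalues i = 0 ∨ hP.eigenvalues i = 1 :=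
  hPP.spectrum_subset ℝ (hP.eigenvalues_mem_spectrum_real i)

theorem IsHermitian.card_eigenvalues_eq_one (hP : P.IsHermitian) (hPP : IsIdempotentElem P) :
    #{i | hP.eigenvalues i = 1} = P.rank := by
  rw [hP.rank_eq_card_non_zero_eigs, Fintype.card_subtype]
  congr 1
  ext i
  rcases hP.eigenvalues_eq_zero_or_one hPP i with h | h <;> simp [h]

theorem IsHermitian.trace_eq_rank_of_isIdempotentElem (hP : P.IsHermitian)
    (hPP : IsIdempotentElem P) : P.trace = P.rank := by
  rw [hP.trace_eq_sum_eigenvalues, ← hP.card_eigenvalues_eq_one hPP, Finset.natCast_card_filter]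
  refine Finset.sum_congr rfl fun i _ => ?_
  rcases hP.eigenvalues_eq_zero_or_one hPP i with h | h <;> simp [h]

theorem IsHermitian.det_smul_one_sub_add_smul (hP : P.IsHermitian) (hPP : IsIdempotentElem P)
    (a b : 𝕜) :
    (a • (1 - P) + b • P).det = a ^ (Fintype.card n - P.rank) * b ^ P.rank := by
  set μ := hP.eigenvalues
  have hdiag : a • (1 - P) + b • P = Unitary.conjStarAlgAut 𝕜 _ hP.eigenvectorUnitary
      (diagonal fun i => a * (1 - μ i) + b * μ i) := by
    conv_lhs => rw [hP.spectral_theorem]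
    rw [← map_one (Unitary.conjStarAlgAut 𝕜 _ hP.eigenvectorUnitary), ← map_sub, ← map_smul,
      ← map_smul, ← map_add]
    congr 1
    ext i j
    by_cases hij : i = j
    · subst hij; simp [μ]
    · simp [hij]
  rw [hdiag, det_map, det_diagonal, ← Finset.prod_filter_mul_prod_filter_not Finset.univ
    (fun i => μ i = 1)]
  have h1 : ∀ i ∈ ({i | μ i = 1} : Finset n), a * (1 - μ i) + b * μ i = b := by
    intro i hi; simp_all
  have h0 : ∀ i ∈ ({i | ¬ μ i = 1} : Finset n), a * (1 - μ i) + b * μ i = a := by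
    intro i hi
    rcases hP.eigenvalues_eq_zero_or_one hPP i with h | h <;> simp_all [μ]
  rw [prod_congr rfl h1, prod_congr rfl h0, prod_const, prod_const, filter_not,
    ← compl_eq_univ_sdiff, card_compl, hP.card_eigenvalues_eq_one hPP, mul_comm]

end Projection

variable [DecidableEq n]

theorem IsHermitian.posDef_smul_one_sub_add_smul {P : Matrix n n ℝ} (hP : P.IsHermitian)
    (hPP : IsIdempotentElem P) {a b : ℝ} (ha : 0 < a) (hb : 0 < b) :
    (a • (1 - P) + b • P).PosDef := by
  have hQ := (isHermitian_one.sub hP).posSemidef_of_isIdempotentElem hPP.one_sub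
  have h := (hQ.smul ha.le).add ((hP.posSemidef_of_isIdempotentElem hPP).smul hb.le)
  rw [h.posDef_iff_det_ne_zero, hP.det_smul_one_sub_add_smul hPP]
  positivity

theorem PosSemidef.det_le_trace_div_card_pow {A : Matrix n n ℝ} (hA : A.PosSemidef) :
    A.det ≤ (A.trace / Fintype.card n) ^ Fintype.card n := by
  rw [hA.1.det_eq_prod_eigenvalues, hA.1.trace_eq_sum_eigenvalues]
  simpa using Real.prod_le_arith_mean_pow univ fun i _ => hA.eigenvalues_nonneg i

open scoped MatrixOrder in
theorem PosSemidef.det_mul_det_le_trace_mul_div_card_pow {S B : Matrix n n ℝ}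
    (hS : S.PosSemidef) (hB : B.PosSemidef) :
    S.det * B.det ≤ ((S * B).trace / Fintype.card n) ^ Fintype.card n := by
  obtain ⟨y, rfl⟩ := CStarAlgebra.nonneg_iff_eq_star_mul_self.mp hS.nonneg
  have hdet : (star y * y).det * B.det = (y * B * yᴴ).det := by
    rw [det_mul, det_mul, det_mul, star_eq_conjTranspose]; ring
  have htr : (star y * y * B).trace = (y * B * yᴴ).trace := by
    rw [star_eq_conjTranspose, Matrix.mul_assoc, trace_mul_comm, Matrix.mul_assoc]
  rw [hdet, htr]
  exact (hB.mul_mul_conjTranspose_same y).det_le_trace_div_card_pow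

open scoped MatrixOrder in
theorem PosSemidef.trace_mul_nonneg {S B : Matrix n n ℝ} (hS : S.PosSemidef)
    (hB : B.PosSemidef) : 0 ≤ (S * B).trace := by
  obtain ⟨y, rfl⟩ := CStarAlgebra.nonneg_iff_eq_star_mul_self.mp hS.nonneg
  rw [star_eq_conjTranspose, Matrix.mul_assoc, trace_mul_comm]
  exact (hB.mul_mul_conjTranspose_same y).trace_nonneg

theorem trace_smul_one_sub_add_smul_mul {P : Matrix n n ℝ} (hP : P.IsHermitian)
    (hPP : IsIdempotentElem P) (G : Matrix n n ℝ) (a b c d : ℝ) :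
    ((c • (1 - P) + d • P) * (G + a • (1 - P) + b • P)).trace
      = c * (((1 - P) * G).trace + a * (Fintype.card n - P.rank : ℕ))
        + d * ((P * G).trace + b * P.rank) := by
  have hQP : (1 - P) * P = 0 := by rw [Matrix.sub_mul, Matrix.one_mul, hPP.eq, sub_self]
  have hPQ : P * (1 - P) = 0 := by rw [Matrix.mul_sub, Matrix.mul_one, hPP.eq, sub_self]
  have hexpand : (c • (1 - P) + d • P) * (G + a • (1 - P) + b • P)
      = c • ((1 - P) * G) + d • (P * G) + (c * a) • (1 - P) + (d * b) • P := by
    simp only [Matrix.add_mul, Matrix.mul_add, Matrix.smul_mul, Matrix.mul_smul, hPP.one_sub.eq,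
      hQP, hPQ, hPP.eq, smul_zero]
    module
  rw [hexpand, trace_add, trace_add, trace_add, trace_smul, trace_smul, trace_smul, trace_smul,
    trace_sub, trace_one, hP.trace_eq_rank_of_isIdempotentElem hPP,
    Nat.cast_sub (rank_le_card_width P)]
  simp only [smul_eq_mul]
  ring

theorem trace_inv_smul_one_sub_add_inv_smul_mul_le_card {P G : Matrix n n ℝ} (hP : P.IsHermitian)
    (hPP : IsIdempotentElem P) (hG : G.PosSemidef) {a b t : ℝ} (ha : 0 < a) (hb : 0 < b)
    (hGt : G.trace ≤ t) (hp : 0 < P.rank) (hq : P.rank < Fintype.card n) :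
    (((a + t / (Fintype.card n - P.rank : ℕ))⁻¹ • (1 - P) + (b + t / P.rank)⁻¹ • P)
      * (G + a • (1 - P) + b • P)).trace ≤ Fintype.card n := by
  set p := P.rank
  set q := Fintype.card n - p
  have hpR : (0 : ℝ) < p := by exact_mod_cast hp
  have hqR : (0 : ℝ) < q := by exact_mod_cast Nat.sub_pos_of_lt hq
  have hg₁ := (hP.posSemidef_of_isIdempotentElem hPP).trace_mul_nonneg hG
  have hg₂ := ((isHermitian_one.sub hP).posSemidef_of_isIdempotentElem
    hPP.one_sub).trace_mul_nonneg hG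
  have hg : ((1 - P) * G).trace + (P * G).trace ≤ t := by
    rwa [← trace_add, ← Matrix.add_mul, sub_add_cancel, Matrix.one_mul]
  have ht : 0 ≤ t := hG.trace_nonneg.trans hGt
  have hP' : (b + t / p)⁻¹ * ((P * G).trace + b * p) ≤ p := by
    rw [inv_mul_le_iff₀ (by positivity), show (b + t / p) * p = b * p + t by field_simp]
    linarith
  have hQ' : (a + t / q)⁻¹ * (((1 - P) * G).trace + a * q) ≤ q := by
    rw [inv_mul_le_iff₀ (by positivity), show (a + t / q) * q = a * q + t by field_simp]
    linarith
  calc _ ≤ (q : ℝ) + p := by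
        rw [trace_smul_one_sub_add_smul_mul hP hPP]; exact add_le_add hQ' hP'
    _ = Fintype.card n := by exact_mod_cast Nat.sub_add_cancel hq.le

theorem det_add_smul_one_sub_add_smul_le {P G : Matrix n n ℝ} (hP : P.IsHermitian)
    (hPP : IsIdempotentElem P) (hG : G.PosSemidef) {a b t : ℝ} (ha : 0 < a) (hb : 0 < b)
    (hGt : G.trace ≤ t) (hp : 0 < P.rank) (hq : P.rank < Fintype.card n) :
    (G + a • (1 - P) + b • P).det
      ≤ (b + t / P.rank) ^ P.rank *
          (a + t / (Fintype.card n - P.rank : ℕ)) ^ (Fintype.card n - P.rank) := by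
  set α := b + t / P.rank
  set β := a + t / (Fintype.card n - P.rank : ℕ)
  have ht : 0 ≤ t := hG.trace_nonneg.trans hGt
  have hS := (hP.posDef_smul_one_sub_add_smul hPP (a := β⁻¹) (b := α⁻¹) (by positivity)
    (by positivity)).posSemidef
  have hB : (G + a • (1 - P) + b • P).PosSemidef := by
    simpa only [add_assoc] using hG.add (hP.posDef_smul_one_sub_add_smul hPP ha hb).posSemidef
  have hdet : (β⁻¹ • (1 - P) + α⁻¹ • P).det * (G + a • (1 - P) + b • P).det ≤ 1 :=
    (hS.det_mul_det_le_trace_mul_div_card_pow hB).trans <| pow_le_one₀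
      (div_nonneg (hS.trace_mul_nonneg hB) (Nat.cast_nonneg _))
      (div_le_one_of_le₀ (trace_inv_smul_one_sub_add_inv_smul_mul_le_card hP hPP hG ha hb hGt hp hq)
        (Nat.cast_nonneg _))
  rwa [hP.det_smul_one_sub_add_smul hPP, inv_pow, inv_pow, ← mul_inv,
    inv_mul_le_iff₀ (by positivity), mul_one, mul_comm] at hdet

end Matrix

/-- Lemma 2: determinant-ratio bound
log( det(B) / (λ₁^q λ₂^p) ) ≤ p·log(1 + k/(p·λ₂)) + q·log(1 + k/(q·λ₁)). -/
theorem log_det_ratio_bound (d p k : ℕ) (hp1 : 1 ≤ p) (hpd : p ≤ d - 1)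
    (P : Matrix (Fin d) (Fin d) ℝ)
    (hsymm : Pᵀ = P) (hidem : P * P = P) (hrank : P.rank = p)
    (l1 l2 : ℝ) (hl1 : 0 < l1) (hl2 : 0 < l2)
    (D : Matrix (Fin k) (Fin d) ℝ)
    (hrow : ∀ i : Fin k, Real.sqrt (D i ⬝ᵥ D i) ≤ 1) :
    Real.log ((Dᵀ * D + l1 • ((1 : Matrix (Fin d) (Fin d) ℝ) - P) + l2 • P).det
        / (l1 ^ (d - p) * l2 ^ p))
      ≤ (p : ℝ) * Real.log (1 + (k : ℝ) / ((p : ℝ) * l2))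
        + ((d - p : ℕ) : ℝ) * Real.log (1 + (k : ℝ) / (((d - p : ℕ) : ℝ) * l1)) := by
  have hP : P.IsHermitian := (conjTranspose_eq_transpose_of_trivial P).trans hsymm
  have hG : (Dᵀ * D).PosSemidef := by simpa using posSemidef_conjTranspose_mul_self D
  have hGk : (Dᵀ * D).trace ≤ k := by
    simpa using trace_transpose_mul_self_le_card fun i => Real.sqrt_le_one.mp (hrow i)
  have hdet := det_add_smul_one_sub_add_smul_le hP hidem hG hl1 hl2 hGk (by omega)
    (by rw [hrank, Fintype.card_fin]; omega)
  have hpos := (PosDef.posSemidef_add hG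
    (hP.posDef_smul_one_sub_add_smul hidem hl1 hl2)).det_pos
  rw [← add_assoc] at hpos
  rw [hrank, Fintype.card_fin] at hdet
  calc _ ≤ Real.log ((1 + k / (p * l2)) ^ p * (1 + k / ((d - p : ℕ) * l1)) ^ (d - p)) := by
        refine Real.log_le_log (by positivity) ((div_le_iff₀ (by positivity)).2 (hdet.trans ?_))
        rw [show l2 + k / p = (1 + k / (p * l2)) * l2 by field_simp,
          show l1 + k / (d - p : ℕ) = (1 + k / ((d - p : ℕ) * l1)) * l1 by field_simp,
          mul_pow, mul_pow]
        exact le_of_eq (by ring)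
    _ = _ := by rw [Real.log_mul (by positivity) (by positivity), Real.log_pow, Real.log_pow]
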